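/- Let (X, 𝔄, d) be a C*-algebra valued metric space over a unital C*-algebra 𝔄, let T : X → X, and let q : X × X → 𝔄 with ‖q(x,y)‖ < 1 for all x,y and δ : X × X → 𝔄₊ satisfy d(Tⁿx, Tⁿy) ⪯ (q(x,y)*)ⁿ · δ(x,y) · q(x,y)ⁿ for all x,y ∈ X and all n ≥ 1. Then for every x₀ ∈ X and all natural numbers 1 ≤ n < m, one has ‖d(Tⁿx₀, Tᵐx₀)‖ ≤ (‖q(x₀, Tx₀)‖^{2n} / (1 − ‖q(x₀, Tx₀)‖²)) · ‖δ(x₀, Tx₀)‖; in particular the orbit sequence (Tⁿx₀) is a Cauchy sequence in (X, 𝔄, d). -/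
import Mathlib


open Filter Topology Function

/-- A C*-algebra valued metric space: `d : X × X → A` into a unital C*-algebra `A`. -/
structure CStarMetric (X : Type*) (A : Type*) [NormedRing A] [StarRing A] [PartialOrder A] where
  d : X → X → A
  nonneg : ∀ x y, 0 ≤ d x y
  eq_zero_iff : ∀ x y, d x y = 0 ↔ x = y
  symm : ∀ x y, d x y = d y x
  triangle : ∀ x y z, d x y ≤ d x z + d z y

variable {X A : Type*} [NormedRing A] [StarRing A] [CStarRing A] [PartialOrder A]
  [StarOrderedRing A] [CompleteSpace A] [NormedAlgebra ℂ A]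

/-- A sequence converges to `x` when `‖d (s n) x‖ → 0`. -/
def CStarConverges (M : CStarMetric X A) (s : ℕ → X) (x : X) : Prop :=
  Tendsto (fun n => ‖M.d (s n) x‖) atTop (𝓝 (0 : ℝ))

/-- Cauchy sequence: `‖d (s n) (s m)‖ → 0` as `n, m → ∞`. -/
def CStarCauchy (M : CStarMetric X A) (s : ℕ → X) : Prop :=
  ∀ ε : ℝ, 0 < ε → ∃ N : ℕ, ∀ n m : ℕ, N ≤ n → N ≤ m → ‖M.d (s n) (s m)‖ < ε

/-- Completeness: every Cauchy sequence converges. -/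
def CStarComplete (M : CStarMetric X A) : Prop :=
  ∀ s : ℕ → X, CStarCauchy M s → ∃ x, CStarConverges M s x

/-- Orbital continuity of `T` at `u`. -/
def OrbContAt (M : CStarMetric X A) (T : X → X) (u : X) : Prop :=
  ∀ (x : X) (k : ℕ → ℕ), StrictMono k →
    Tendsto (fun i => ‖M.d (T^[k i] x) u‖) atTop (𝓝 (0 : ℝ)) →
    Tendsto (fun i => ‖M.d (T^[k i + 1] x) (T u)‖) atTop (𝓝 (0 : ℝ))

/-- Orbital continuity of `T` on `X`. -/
def OrbCont (M : CStarMetric X A) (T : X → X) : Prop :=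
  ∀ u, OrbContAt M T u

/-- Ćirić-type1 contractive mapping. -/
def CiricType1 (M : CStarMetric X A) (T : X → X) : Prop :=
  ∃ q δ : X → X → A, (∀ x y, ‖q x y‖ < 1) ∧ (∀ x y, 0 ≤ δ x y) ∧
    ∀ x y : X, ∀ n : ℕ, 1 ≤ n →
      M.d (T^[n] x) (T^[n] y) ≤ star (q x y) ^ n * δ x y * q x y ^ n

/-- Ćirić-type2 contractive mapping: `q` takes values in the central positive elements. -/
def CiricType2 (M : CStarMetric X A) (T : X → X) : Prop :=
  ∃ q δ : X → X → A,
    (∀ x y, 0 ≤ q x y ∧ (∀ b : A, q x y * b = b * q x y) ∧ ‖q x y‖ < 1) ∧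
    (∀ x y, 0 ≤ δ x y) ∧
    ∀ x y : X, ∀ n : ℕ, 1 ≤ n → M.d (T^[n] x) (T^[n] y) ≤ q x y ^ n * δ x y

section StarModuleDerivation

variable {A : Type*} [NormedRing A] [StarRing A] [CStarRing A] [PartialOrder A]
  [StarOrderedRing A] [CompleteSpace A] [NormedAlgebra ℂ A]

private lemma starRealSmulAux (r : ℝ) (a : A) : star (r • a) = r • star a :=
  map_real_smul (starAddEquiv : A ≃+ A) continuous_star r a

private lemma starISmulOneAux : star (Complex.I • (1 : A)) = -(Complex.I • (1 : A)) := by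
  set j : A := Complex.I • (1 : A) with hj
  have hcentral : ∀ b : A, j * b = b * j := fun b => by
    rw [hj, smul_mul_assoc, mul_smul_comm, one_mul, mul_one]
  have hj2 : j * j = -1 := by
    rw [hj, smul_mul_assoc, one_mul, smul_smul, Complex.I_mul_I, neg_smul, one_smul]
  set u : A := star j with hu
  have huj : star u = j := by rw [hu, star_star]
  have hucentral : ∀ b : A, u * b = b * u := fun b => by
    calc u * b = star (star b * j) := by rw [star_mul, star_star, hu]
      _ = star (j * star b) := by rw [hcentral]
      _ = b * u := by rw [star_mul, star_star, hu]
  set v : A := j * u with hv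
  have hvstar : star v = v := by rw [hv, star_mul, huj, ← hu, ← hucentral]
  have hv2 : v * v = 1 := by
    have : v * v = (j * j) * (u * u) := by
      rw [hv]; rw [mul_assoc, ← mul_assoc u j u, hucentral j, mul_assoc, ← mul_assoc,
        ← mul_assoc]
    rw [this, hj2]
    have hu2 : u * u = -1 := by rw [hu, ← star_mul, hj2, star_neg, star_one]
    rw [hu2]; simp
  have hvcentral : ∀ b : A, v * b = b * v := fun b => by
    rw [hv, mul_assoc, hucentral b, ← mul_assoc, hcentral b, mul_assoc]
  set q : A := (2 : ℝ)⁻¹ • (1 - v) with hqdef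
  have hqstar : star q = q := by
    rw [hqdef, starRealSmulAux, star_sub, star_one, hvstar]
  have h1v : (1 - v) * (1 - v) = (2 : ℝ) • (1 - v) := by
    have h : (1 - v) * (1 - v) = 1 - v - v + v * v := by noncomm_ring
    rw [h, hv2]; module
  have hqq : q * q = q := by
    rw [hqdef, smul_mul_assoc, mul_smul_comm, h1v, smul_smul, smul_smul]
    norm_num
  have hvq : v * q = -q := by
    rw [hqdef, mul_smul_comm, mul_sub, mul_one, hv2]
    rw [smul_sub, smul_sub]
    module
  -- key positivity argument with x := q
  have hyy : star q * q = 0 := by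
    have h1 : (0 : A) ≤ star q * q := star_mul_self_nonneg q
    have h2 : (0 : A) ≤ star (j * q) * (j * q) := star_mul_self_nonneg (j * q)
    have h3 : star (j * q) * (j * q) = -(star q * q) := by
      rw [star_mul]
      calc star q * star j * (j * q) = star q * (star j * j) * q := by
            rw [mul_assoc, mul_assoc, mul_assoc]
        _ = star q * v * q := by rw [← hu, hucentral j, ← hv]
        _ = star q * (v * q) := by rw [mul_assoc]
        _ = -(star q * q) := by rw [hvq, mul_neg]
    rw [h3] at h2
    have : star q * q ≤ 0 := by
      have := neg_nonneg.mp h2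
      exact this
    exact le_antisymm this h1
  have hqnorm : ‖q‖ * ‖q‖ = 0 := by
    rw [← CStarRing.norm_star_mul_self, hyy, norm_zero]
  have hq0 : q = 0 := by
    have : ‖q‖ = 0 := by nlinarith [norm_nonneg q]
    exact norm_eq_zero.mp this
  have hv1 : v = 1 := by
    have hsub : (1 : A) - v = 0 := by
      have h2 : (2 : ℝ)⁻¹ • (1 - v) = 0 := hq0
      rcases smul_eq_zero.mp h2 with h | h
      · norm_num at h
      · exact h
    have := sub_eq_zero.mp hsub
    exact this.symm
  -- from j * u = 1 conclude u = -j
  have hju : j * u = 1 := by rw [← hv, hv1]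
  have : j * (j * u) = j := by rw [hju, mul_one]
  rw [← mul_assoc, hj2, neg_one_mul] at this
  calc star j = u := rfl
    _ = -(-u) := by rw [neg_neg]
    _ = -j := by rw [this]

private lemma starModuleAux : StarModule ℂ A := by
  constructor
  intro z a
  have hIa : ∀ b : A, Complex.I • b = (Complex.I • (1 : A)) * b := fun b => by
    rw [smul_mul_assoc, one_mul]
  have hstarI : star (Complex.I • a) = -(Complex.I • star a) := by
    rw [hIa a, star_mul, starISmulOneAux, mul_neg, mul_smul_comm, mul_one]
  have hre : ∀ (r : ℝ) (b : A), star ((r : ℂ) • b) = (r : ℂ) • star b := by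
    intro r b
    rw [Complex.coe_smul, starRealSmulAux, Complex.coe_smul]
  have hz : z • a = (z.re : ℂ) • a + (z.im : ℂ) • (Complex.I • a) := by
    rw [smul_smul, ← add_smul, Complex.re_add_im]
  rw [hz, star_add, hre, hre, hstarI]
  rw [smul_neg, ← sub_eq_add_neg, smul_smul, ← sub_smul]
  congr 1
  rw [Complex.star_def]
  apply Complex.ext <;> simp

private lemma cstarNormMonoAux (a b : A) (ha : 0 ≤ a) (hab : a ≤ b) : ‖a‖ ≤ ‖b‖ := by
  letI : StarModule ℂ A := starModuleAux
  letI : CStarAlgebra A :=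
    { ‹NormedRing A›, ‹StarRing A›, ‹CompleteSpace A›, ‹CStarRing A›,
      ‹NormedAlgebra ℂ A›, ‹StarModule ℂ A› with }
  exact CStarAlgebra.norm_le_norm_of_nonneg_of_le ha hab

end StarModuleDerivation

/-- Quantitative Cauchy estimate for the orbit of a Ciric-type1 contractive mapping. -/
theorem ciric1_orbit_estimate_and_cauchy
    (M : CStarMetric X A) (T : X → X)
    (q δ : X → X → A) (hq : ∀ x y, ‖q x y‖ < 1) (hδ : ∀ x y, 0 ≤ δ x y)
    (hT : ∀ x y : X, ∀ n : ℕ, 1 ≤ n →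
      M.d (T^[n] x) (T^[n] y) ≤ star (q x y) ^ n * δ x y * q x y ^ n)
    (x₀ : X) :
    (∀ n m : ℕ, 1 ≤ n → n < m →
      ‖M.d (T^[n] x₀) (T^[m] x₀)‖ ≤
        ‖q x₀ (T x₀)‖ ^ (2 * n) / (1 - ‖q x₀ (T x₀)‖ ^ 2) * ‖δ x₀ (T x₀)‖) ∧
    CStarCauchy M (fun n => T^[n] x₀) := by
  classical
  set Q := ‖q x₀ (T x₀)‖ with hQdef
  set D := ‖δ x₀ (T x₀)‖ with hDdef
  have hQ0 : 0 ≤ Q := norm_nonneg _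
  have hQ1 : Q < 1 := hq _ _
  have hD0 : 0 ≤ D := norm_nonneg _
  have hr1 : Q ^ 2 < 1 := by nlinarith
  have hr0 : 0 ≤ Q ^ 2 := sq_nonneg Q
  have hpos : 0 < 1 - Q ^ 2 := by linarith
  have hstep : ∀ k : ℕ, 1 ≤ k → ‖M.d (T^[k] x₀) (T^[k+1] x₀)‖ ≤ Q ^ (2 * k) * D := by
    intro k hk
    have h1 := hT x₀ (T x₀) k hk
    rw [Function.iterate_succ_apply]
    refine le_trans (cstarNormMonoAux _ _ (M.nonneg _ _) h1) ?_
    have hsp : ‖star (q x₀ (T x₀)) ^ k‖ ≤ Q ^ k := by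
      rw [← star_pow, norm_star]; exact norm_pow_le' _ hk
    have hp : ‖q x₀ (T x₀) ^ k‖ ≤ Q ^ k := norm_pow_le' _ hk
    calc ‖star (q x₀ (T x₀)) ^ k * δ x₀ (T x₀) * q x₀ (T x₀) ^ k‖
        ≤ ‖star (q x₀ (T x₀)) ^ k * δ x₀ (T x₀)‖ * ‖q x₀ (T x₀) ^ k‖ := norm_mul_le _ _
      _ ≤ (‖star (q x₀ (T x₀)) ^ k‖ * ‖δ x₀ (T x₀)‖) * ‖q x₀ (T x₀) ^ k‖ := by
          gcongr; exact norm_mul_le _ _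
      _ ≤ (Q ^ k * D) * Q ^ k := by
          have h0 : (0:ℝ) ≤ Q ^ k := pow_nonneg hQ0 k
          gcongr
      _ = Q ^ (2 * k) * D := by rw [two_mul, pow_add]; ring
  have hsum : ∀ n m : ℕ, 1 ≤ n → n < m →
      ‖M.d (T^[n] x₀) (T^[m] x₀)‖ ≤ ∑ k ∈ Finset.Ico n m, Q ^ (2 * k) * D := by
    intro n m hn hnm
    induction m, hnm using Nat.le_induction with
    | base =>
        rw [Nat.Ico_succ_singleton, Finset.sum_singleton]
        exact hstep n hn
    | succ m hm ih =>
        have hm1 : 1 ≤ m := le_trans hn (le_trans (Nat.le_succ n) hm)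
        have hnm' : n ≤ m := le_trans (Nat.le_succ n) hm
        calc ‖M.d (T^[n] x₀) (T^[m+1] x₀)‖
            ≤ ‖M.d (T^[n] x₀) (T^[m] x₀) + M.d (T^[m] x₀) (T^[m+1] x₀)‖ :=
              cstarNormMonoAux _ _ (M.nonneg _ _) (M.triangle _ _ _)
          _ ≤ ‖M.d (T^[n] x₀) (T^[m] x₀)‖ + ‖M.d (T^[m] x₀) (T^[m+1] x₀)‖ := norm_add_le _ _
          _ ≤ (∑ k ∈ Finset.Ico n m, Q ^ (2 * k) * D) + Q ^ (2 * m) * D :=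
              add_le_add ih (hstep m hm1)
          _ = ∑ k ∈ Finset.Ico n (m+1), Q ^ (2 * k) * D :=
              (Finset.sum_Ico_succ_top hnm' _).symm
  have hgeo : ∀ n m : ℕ, (∑ k ∈ Finset.Ico n m, (Q ^ 2) ^ k) ≤ (Q ^ 2) ^ n * (1 - Q ^ 2)⁻¹ := by
    intro n m
    rw [Finset.sum_Ico_eq_sum_range]
    have hco : ∀ j ∈ Finset.range (m - n), (Q ^ 2) ^ (n + j) = (Q ^ 2) ^ n * (Q ^ 2) ^ j :=
      fun j _ => pow_add _ _ _
    rw [Finset.sum_congr rfl hco, ← Finset.mul_sum]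
    have hle : (∑ j ∈ Finset.range (m - n), (Q ^ 2) ^ j) ≤ (1 - Q ^ 2)⁻¹ := by
      refine le_trans (Summable.sum_le_tsum (Finset.range (m - n))
        (fun i _ => pow_nonneg hr0 i) (summable_geometric_of_lt_one hr0 hr1)) ?_
      rw [tsum_geometric_of_lt_one hr0 hr1]
    exact mul_le_mul_of_nonneg_left hle (pow_nonneg hr0 n)
  have hsumbound : ∀ n m : ℕ,
      (∑ k ∈ Finset.Ico n m, Q ^ (2 * k) * D) ≤ Q ^ (2 * n) / (1 - Q ^ 2) * D := by
    intro n m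
    have h1 : (∑ k ∈ Finset.Ico n m, Q ^ (2 * k) * D)
        = (∑ k ∈ Finset.Ico n m, (Q ^ 2) ^ k) * D := by
      rw [Finset.sum_mul]
      exact Finset.sum_congr rfl fun k _ => by rw [← pow_mul, mul_comm 2 k, pow_mul]
    rw [h1, div_eq_mul_inv, pow_mul]
    exact mul_le_mul_of_nonneg_right (hgeo n m) hD0
  have hmain : ∀ n m : ℕ, 1 ≤ n → n < m →
      ‖M.d (T^[n] x₀) (T^[m] x₀)‖ ≤ Q ^ (2 * n) / (1 - Q ^ 2) * D :=
    fun n m hn hnm => (hsum n m hn hnm).trans (hsumbound n m)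
  refine ⟨hmain, ?_⟩
  intro ε hε
  have hc : Tendsto (fun n : ℕ => (Q ^ 2) ^ n * ((1 - Q ^ 2)⁻¹ * D)) atTop (𝓝 0) := by
    simpa using (tendsto_pow_atTop_nhds_zero_of_lt_one hr0 hr1).mul_const ((1 - Q ^ 2)⁻¹ * D)
  obtain ⟨N₀, hN₀⟩ := eventually_atTop.mp (hc.eventually (gt_mem_nhds hε))
  refine ⟨max N₀ 1, ?_⟩
  have key : ∀ n m : ℕ, max N₀ 1 ≤ n → n < m → ‖M.d (T^[n] x₀) (T^[m] x₀)‖ < ε := by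
    intro n m hn hnm
    have h1n : 1 ≤ n := le_trans (le_max_right N₀ 1) hn
    have hNn : N₀ ≤ n := le_trans (le_max_left N₀ 1) hn
    refine lt_of_le_of_lt (hmain n m h1n hnm) ?_
    have heq : Q ^ (2 * n) / (1 - Q ^ 2) * D = (Q ^ 2) ^ n * ((1 - Q ^ 2)⁻¹ * D) := by
      rw [div_eq_mul_inv, pow_mul, mul_assoc]
    rw [heq]
    exact hN₀ n hNn
  intro n m hn hm
  rcases lt_trichotomy n m with h | h | h
  · exact key n m hn h
  · subst h
    have hz : M.d (T^[n] x₀) (T^[n] x₀) = 0 := (M.eq_zero_iff _ _).mpr rfl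
    simpa [hz] using hε
  · have hk := key m n hm h
    rwa [M.symm] at hk
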